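/- Let E be a directed graph with vertex v_0 and n ≥ 1. The graph E(v_0,n)(E^0), obtained from E(v_0,n) by the source-replacement construction applied to the hereditary subset E^0, is isomorphic as a directed graph to E'(v_0,n), the graph obtained from E by adding n new vertices v_1,…,v_n each with a single edge e_i from v_i directly to v_0. -/

import Mathlib

/-- A directed graph: vertices, edges, source and range maps. -/
structure DGraph where
  V : Type
  E : Type
  s : E → V
  r : E → V

namespace DGraph

/-- One-step reachability: there is an edge from `v` to `w`. -/
def Step (G : DGraph) (v w : G.V) : Prop := ∃ e : G.E, G.s e = v ∧ G.r e = w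

/-- `Reaches G v w` means there is a directed path (possibly trivial) from `v` to `w`. -/
def Reaches (G : DGraph) : G.V → G.V → Prop := Relation.ReflTransGen G.Step

/-- A subset of vertices is hereditary if it is closed under reachability. -/
def Hereditary (G : DGraph) (H : Set G.V) : Prop :=
  ∀ v w : G.V, v ∈ H → G.Reaches v w → w ∈ H

end DGraph

/-- A (nontrivial, finite) directed path in a graph: a nonempty list of composable
edges. -/
structure DPath (G : DGraph) where
  edges : List G.E
  ne : edges ≠ []
  chain : edges.Chain' (fun e f => G.r e = G.s f)

namespace DPath

variable {G : DGraph}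

/-- The last edge of a path. -/
def lastE (p : DPath G) : G.E := p.edges.getLast p.ne

/-- The first edge of a path. -/
def headE (p : DPath G) : G.E := p.edges.head p.ne

/-- The source vertex of a path. -/
def first (p : DPath G) : G.V := G.s p.headE

/-- The range vertex of a path. -/
def last (p : DPath G) : G.V := G.r p.lastE

end DPath

/-- The set `F(H)` of paths `α = e₁ ⋯ eₙ` with `s(eₙ) ∉ H` and `r(eₙ) ∈ H`. -/
def FH (G : DGraph) (H : Set G.V) : Set (DPath G) :=
  {α : DPath G | G.s α.lastE ∉ H ∧ G.r α.lastE ∈ H}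

/-- The restricted graph on the complement of `H` is acyclic: there is no cycle all of
whose edges have source and range outside `H`. -/
def AcyclicOutside (G : DGraph) (H : Set G.V) : Prop :=
  ¬ ∃ p : DPath G, (∀ e ∈ p.edges, G.s e ∉ H ∧ G.r e ∉ H) ∧ p.first = p.last

/-- The source-replacement graph `G(H)` of a hereditary subset `H`: its vertices are
`H ∪ F(H)` and its edges are `s⁻¹(H)` together with one new edge `ᾱ` from each new
vertex `α ∈ F(H)` to `r(α) ∈ H`. -/
def sourceRepl (G : DGraph) (H : Set G.V)
    (hH : ∀ e : G.E, G.s e ∈ H → G.r e ∈ H) : DGraph where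
  V := {v : G.V // v ∈ H} ⊕ {α : DPath G // α ∈ FH G H}
  E := {e : G.E // G.s e ∈ H} ⊕ {α : DPath G // α ∈ FH G H}
  s := Sum.elim (fun e => Sum.inl ⟨G.s e.1, e.2⟩) (fun α => Sum.inr α)
  r := Sum.elim (fun e => Sum.inl ⟨G.r e.1, hH e.1 e.2⟩)
    (fun α => Sum.inl ⟨α.1.last, α.2.2⟩)

/-- The graph `E(v₀,n)`: attach a head `vₙ → ⋯ → v₁ → v₀` of length `n` at the vertex
`v₀`. -/
def headAttach (G : DGraph) (v0 : G.V) (n : ℕ) : DGraph where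
  V := G.V ⊕ Fin n
  E := G.E ⊕ Fin n
  s := Sum.elim (fun e => Sum.inl (G.s e)) (fun i => Sum.inr i)
  r := Sum.elim (fun e => Sum.inl (G.r e))
    (fun i => if h : (i : ℕ) = 0 then Sum.inl v0 else Sum.inr ⟨(i : ℕ) - 1, by omega⟩)

/-- The graph `E'(v₀,n)`: add `n` new vertices `v₁, …, vₙ`, each with a single edge
`eᵢ : vᵢ → v₀` directly to `v₀`. -/
def primeAttach (G : DGraph) (v0 : G.V) (n : ℕ) : DGraph where
  V := G.V ⊕ Fin n
  E := G.E ⊕ Fin n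
  s := Sum.elim (fun e => Sum.inl (G.s e)) (fun i => Sum.inr i)
  r := Sum.elim (fun e => Sum.inl (G.r e)) (fun _ => Sum.inl v0)

/-- An isomorphism of directed graphs: bijections on vertices and edges commuting with
the source and range maps. -/
structure DGraphIso (G G' : DGraph) where
  vEquiv : G.V ≃ G'.V
  eEquiv : G.E ≃ G'.E
  s_comm : ∀ e : G.E, G'.s (eEquiv e) = vEquiv (G.s e)
  r_comm : ∀ e : G.E, G'.r (eEquiv e) = vEquiv (G.r e)

/-!
The vertices of `E(v₀,n)` outside `E⁰` are the head vertices, and the only edges leaving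
them are the head edges, which form the single path `vₙ → ⋯ → v₁ → v₀`. Hence the paths in
`F(E⁰)` are exactly its tails `vₖ → ⋯ → v₀` (`1 ≤ k ≤ n`), and source replacement turns each
of them into a new vertex with a single edge to `v₀`: this is `E'(v₀,n)` with `vₖ` renamed.
-/

lemma DPath.ext_edges {G : DGraph} {p q : DPath G} (h : p.edges = q.edges) : p = q := by
  cases p; cases q; cases h; rfl

lemma Equiv.Set.inl_rangeInl {α β : Type*} (x : Set.range (Sum.inl : α → α ⊕ β)) :
    Sum.inl (Equiv.Set.rangeInl α β x) = x.1 := by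
  rw [← Equiv.Set.rangeInl_symm_apply_coe, Equiv.symm_apply_apply]

lemma Sum.inr_notMem_range_inl {α β : Type*} (b : β) :
    (Sum.inr b : α ⊕ β) ∉ Set.range Sum.inl :=
  fun ⟨_, h⟩ => Sum.inl_ne_inr h

section HeadAttach

variable {G : DGraph} {v0 : G.V} {n : ℕ}

lemma headAttach_r_inr_cases (i : Fin n) :
    ((i : ℕ) = 0 ∧ (headAttach G v0 n).r (Sum.inr i) = Sum.inl v0) ∨
      ∃ j : Fin n, (i : ℕ) = j + 1 ∧ (headAttach G v0 n).r (Sum.inr i) = Sum.inr j := by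
  obtain ⟨_ | j, hi⟩ := i
  · exact Or.inl ⟨rfl, rfl⟩
  · exact Or.inr ⟨⟨j, by omega⟩, rfl, rfl⟩

lemma headAttach_s_mem_range_inl {e : (headAttach G v0 n).E} :
    (headAttach G v0 n).s e ∈ Set.range Sum.inl ↔ e ∈ Set.range Sum.inl := by
  rcases e with f | i
  · exact iff_of_true ⟨_, rfl⟩ ⟨_, rfl⟩
  · exact iff_of_false (Sum.inr_notMem_range_inl i) (Sum.inr_notMem_range_inl i)

lemma headAttach_eq_inr_of_r_eq_inr {e : (headAttach G v0 n).E} {j : Fin n}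
    (he : (headAttach G v0 n).r e = Sum.inr j) :
    ∃ h : (j : ℕ) + 1 < n, e = Sum.inr ⟨j + 1, h⟩ := by
  rcases e with f | i
  · exact absurd he Sum.inl_ne_inr
  · rcases headAttach_r_inr_cases (v0 := v0) i with ⟨-, hr⟩ | ⟨j', hi, hr⟩
    · exact absurd (hr.symm.trans he) Sum.inl_ne_inr
    · obtain rfl := Sum.inr_injective (hr.symm.trans he)
      exact ⟨hi ▸ i.2, congrArg Sum.inr (Fin.ext hi)⟩

/-- The edge `Sum.inr i` of `headAttach` is the paper's `e_{i+1} : v_{i+1} → v_i`, so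
`headPath G v0 n k h` is the path `e_{k+1} ⋯ e_1`. -/
def headPath (G : DGraph) (v0 : G.V) (n : ℕ) : (k : ℕ) → k < n → List (headAttach G v0 n).E
  | 0, h => [Sum.inr ⟨0, h⟩]
  | k + 1, h => Sum.inr ⟨k + 1, h⟩ :: headPath G v0 n k (by omega)

lemma headPath_eq_cons :
    ∀ (k : ℕ) (h : k < n), ∃ t, headPath G v0 n k h = Sum.inr ⟨k, h⟩ :: t
  | 0, _ => ⟨[], rfl⟩
  | _ + 1, _ => ⟨_, rfl⟩

lemma headPath_ne_nil (k : ℕ) (h : k < n) : headPath G v0 n k h ≠ [] := by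
  obtain ⟨t, ht⟩ := headPath_eq_cons (G := G) (v0 := v0) k h
  rw [ht]
  exact List.cons_ne_nil _ _

lemma length_headPath : ∀ (k : ℕ) (h : k < n), (headPath G v0 n k h).length = k + 1
  | 0, _ => rfl
  | k + 1, _ => congrArg (· + 1) (length_headPath k _)

lemma getLast_headPath : ∀ (k : ℕ) (h : k < n),
    (headPath G v0 n k h).getLast (headPath_ne_nil k h) = Sum.inr ⟨0, by omega⟩
  | 0, _ => rfl
  | k + 1, _ => (List.getLast_cons (headPath_ne_nil k _)).trans (getLast_headPath k _)

lemma headPath_isChain : ∀ (k : ℕ) (h : k < n),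
    (headPath G v0 n k h).IsChain (fun e f => (headAttach G v0 n).r e = (headAttach G v0 n).s f)
  | 0, _ => List.isChain_singleton _
  | k + 1, h => by
    obtain ⟨t, ht⟩ := headPath_eq_cons (G := G) (v0 := v0) (n := n) k (by omega)
    have hchain := headPath_isChain k (Nat.lt_of_succ_lt h)
    change List.IsChain _ (_ :: headPath G v0 n k _)
    rw [ht] at hchain ⊢
    exact List.isChain_cons_cons.mpr ⟨rfl, hchain⟩

/-- Walking backwards from `e_1`, each head edge has a unique predecessor. -/
lemma exists_eq_headPath (h0 : 0 < n) : ∀ (L : List (headAttach G v0 n).E) (hne : L ≠ []),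
    L.IsChain (fun e f => (headAttach G v0 n).r e = (headAttach G v0 n).s f) →
    L.getLast hne = Sum.inr ⟨0, h0⟩ → ∃ k h, L = headPath G v0 n k h
  | [], hne, _, _ => absurd rfl hne
  | [_], _, _, hx => ⟨0, h0, congrArg ([·]) hx⟩
  | x :: y :: L, _, hchain, hlast => by
    obtain ⟨hxy, hchain⟩ := List.isChain_cons_cons.mp hchain
    obtain ⟨k, hk, hL⟩ :=
      exists_eq_headPath h0 (y :: L) (List.cons_ne_nil _ _) hchain (by simpa using hlast)
    obtain ⟨t, ht⟩ := headPath_eq_cons (G := G) (v0 := v0) k hk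
    obtain ⟨rfl, rfl⟩ := List.cons_eq_cons.mp (hL.trans ht)
    obtain ⟨hk', rfl⟩ := headAttach_eq_inr_of_r_eq_inr hxy
    exact ⟨k + 1, hk', by rw [hL]; rfl⟩

lemma mem_FH_iff {α : DPath (headAttach G v0 n)} :
    α ∈ FH (headAttach G v0 n) (Set.range Sum.inl) ↔
      ∃ h0 : 0 < n, α.lastE = Sum.inr ⟨0, h0⟩ := by
  refine ⟨fun ⟨hs, hr⟩ => ?_, fun ⟨h0, hlast⟩ => ?_⟩
  · rcases he : α.lastE with f | i
    · rw [he] at hs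
      exact absurd ⟨G.s f, rfl⟩ hs
    · rw [he] at hr
      rcases headAttach_r_inr_cases (v0 := v0) i with ⟨hi, -⟩ | ⟨j, -, hri⟩
      · exact ⟨by omega, congrArg Sum.inr (Fin.ext hi)⟩
      · rw [hri] at hr
        exact absurd hr (Sum.inr_notMem_range_inl j)
  · refine ⟨?_, ?_⟩ <;> rw [hlast]
    · exact Sum.inr_notMem_range_inl _
    · exact ⟨v0, rfl⟩

lemma last_of_mem_FH {α : DPath (headAttach G v0 n)}
    (hα : α ∈ FH (headAttach G v0 n) (Set.range Sum.inl)) : α.last = Sum.inl v0 := by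
  obtain ⟨h0, hlast⟩ := mem_FH_iff.mp hα
  rw [DPath.last, hlast]
  rfl

def headTail (k : Fin n) : {α : DPath (headAttach G v0 n) //
    α ∈ FH (headAttach G v0 n) (Set.range Sum.inl)} :=
  ⟨⟨headPath G v0 n k k.2, headPath_ne_nil k k.2, headPath_isChain k k.2⟩,
    mem_FH_iff.mpr ⟨_, getLast_headPath k k.2⟩⟩

lemma headTail_bijective : Function.Bijective (headTail (G := G) (v0 := v0) (n := n)) := by
  refine ⟨fun k l hkl => Fin.ext ?_, fun ⟨α, hα⟩ => ?_⟩
  · have hlen := congrArg (fun α => α.1.edges.length) hkl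
    simpa [headTail, length_headPath] using hlen
  · obtain ⟨h0, hlast⟩ := mem_FH_iff.mp hα
    obtain ⟨k, hk, hα'⟩ := exists_eq_headPath h0 α.edges α.ne α.chain hlast
    exact ⟨⟨k, hk⟩, Subtype.ext (DPath.ext_edges hα'.symm)⟩

end HeadAttach

theorem sourceRepl_headAttach_iso_primeAttach_general (G : DGraph) (v0 : G.V) (n : ℕ)
    (hH : ∀ e : (headAttach G v0 n).E,
      (headAttach G v0 n).s e ∈ Set.range (Sum.inl : G.V → (headAttach G v0 n).V) →
      (headAttach G v0 n).r e ∈ Set.range (Sum.inl : G.V → (headAttach G v0 n).V)) :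
    Nonempty (DGraphIso
      (sourceRepl (headAttach G v0 n)
        (Set.range (Sum.inl : G.V → (headAttach G v0 n).V)) hH)
      (primeAttach G v0 n)) := by
  let tails := (Equiv.ofBijective _ (headTail_bijective (G := G) (v0 := v0) (n := n))).symm
  let baseEdges :
      {e : (headAttach G v0 n).E // (headAttach G v0 n).s e ∈ Set.range Sum.inl} ≃ G.E :=
    (Equiv.subtypeEquivRight fun _ => headAttach_s_mem_range_inl).trans
      (Equiv.Set.rangeInl G.E (Fin n))
  refine ⟨⟨(Equiv.Set.rangeInl G.V (Fin n)).sumCongr tails, baseEdges.sumCongr tails,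
    ?_, ?_⟩⟩
  · rintro (⟨e, he⟩ | α)
    · obtain ⟨f, rfl⟩ := headAttach_s_mem_range_inl.mp he
      rfl
    · rfl
  · rintro (⟨e, he⟩ | ⟨α, hα⟩)
    · obtain ⟨f, rfl⟩ := headAttach_s_mem_range_inl.mp he
      rfl
    · change Sum.inl v0 = Sum.inl (Equiv.Set.rangeInl G.V (Fin n) ⟨α.last, hα.2⟩)
      exact (last_of_mem_FH hα).symm.trans (Equiv.Set.inl_rangeInl ⟨α.last, hα.2⟩).symm

/-- The graph `E(v₀,n)(E⁰)`, obtained from `E(v₀,n)` by source replacement along the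
hereditary subset `E⁰`, is isomorphic as a directed graph to `E'(v₀,n)`. -/
theorem sourceRepl_headAttach_iso_primeAttach (G : DGraph) (v0 : G.V) (n : ℕ)
    (hn : 1 ≤ n)
    (hH : ∀ e : (headAttach G v0 n).E,
      (headAttach G v0 n).s e ∈ Set.range (Sum.inl : G.V → (headAttach G v0 n).V) →
      (headAttach G v0 n).r e ∈ Set.range (Sum.inl : G.V → (headAttach G v0 n).V)) :
    Nonempty (DGraphIso
      (sourceRepl (headAttach G v0 n)
        (Set.range (Sum.inl : G.V → (headAttach G v0 n).V)) hH)
      (primeAttach G v0 n)) :=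
  sourceRepl_headAttach_iso_primeAttach_general G v0 n hH
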